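/- arXiv:1305.5053 — 7 statements merged into one kernel-verified Lean document; each statement's English description precedes it below -/
import Mathlib

section
/- Let m ≥ 1 and let c, n be natural numbers with c + 1 ≤ n. Let A be the set of plurality scoring profiles x = (x_1,…,x_m) ∈ ℕ^m with x_1 + ⋯ + x_m = n such that there exists an index w with x_w − x_i ≥ c + 1 for every i ≠ w. Then |A| / C(n+m−1, m−1) ≥ ((n−c)/(n+1))^{m−1}. -/
/-!
Let `a = n - (c + 1)`. Adding `c + 1` votes to a top-scoring candidate of a profile of `a` voters
yields a profile of `n` voters in which that candidate leads everyone by `c + 1`; since the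
leader of such a profile is unique, the map is injective, so `|A| ≥ C(a + m - 1, m - 1)`.
Finally `C(a + k, k) / C(n + k, k) = ∏_{j=1}^{k} (a + j) / (n + j) ≥ ((a + 1) / (n + 1))^k`.
-/

open Finset

namespace Nat

theorem succ_pow_mul_add_choose_le {a b : ℕ} (hab : a ≤ b) (k : ℕ) :
    (a + 1) ^ k * (b + k).choose k ≤ (a + k).choose k * (b + 1) ^ k := by
  induction k with
  | zero => simp
  | succ k ih =>
    have step : (a + 1) * (b + k + 1) ≤ (b + 1) * (a + k + 1) := by nlinarith
    refine Nat.le_of_mul_le_mul_right ?_ k.succ_pos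
    calc (a + 1) ^ (k + 1) * (b + k + 1).choose (k + 1) * (k + 1)
        = (a + 1) ^ k * (b + k).choose k * ((a + 1) * (b + k + 1)) := by
          linear_combination (a + 1) ^ (k + 1) * (add_one_mul_choose_eq (b + k) k).symm
      _ ≤ (a + k).choose k * (b + 1) ^ k * ((b + 1) * (a + k + 1)) := Nat.mul_le_mul ih step
      _ = (a + k + 1).choose (k + 1) * (b + 1) ^ (k + 1) * (k + 1) := by
          linear_combination (b + 1) ^ (k + 1) * add_one_mul_choose_eq (a + k) k

end Nat

theorem eq_of_forall_ne_lt {ι α : Type*} [Preorder α] {x : ι → α} {w w' : ι}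
    (h : ∀ i, i ≠ w → x i < x w) (h' : ∀ i, i ≠ w' → x i < x w') : w = w' := by
  by_contra hne
  exact lt_asymm (h w' (Ne.symm hne)) (h' w hne)

section Profiles

variable {ι : Type*} [DecidableEq ι]

theorem add_single_leads {y : ι → ℕ} {w : ι} (hw : ∀ i, y i ≤ y w) (c : ℕ) :
    ∀ i, i ≠ w →
      (y + Pi.single w (c + 1) : ι → ℕ) i + c + 1 ≤
        (y + Pi.single w (c + 1) : ι → ℕ) w := by
  intro i hi
  simp only [Pi.add_apply, Pi.single_eq_of_ne hi, Pi.single_eq_same]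
  have := hw i
  omega

variable [Fintype ι]

def scoreProfiles (ι : Type*) [Fintype ι] (n : ℕ) : Set (ι → ℕ) :=
  {x | ∑ i, x i = n}

def collusionProofProfiles (ι : Type*) [Fintype ι] (c n : ℕ) : Set (ι → ℕ) :=
  {x | ∑ i, x i = n ∧ ∃ w, ∀ i, i ≠ w → x i + c + 1 ≤ x w}

theorem scoreProfiles_finite (n : ℕ) : (scoreProfiles ι n).Finite :=
  Set.finite_coe_iff.mp (Finite.of_equiv _ (Sym.equivNatSumOfFintype ι n))

theorem ncard_scoreProfiles (n : ℕ) :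
    (scoreProfiles ι n).ncard = (Fintype.card ι + n - 1).choose n := by
  rw [← Nat.card_coe_set_eq, ← Sym.card_sym_eq_choose, ← Nat.card_eq_fintype_card]
  exact Nat.card_congr (Sym.equivNatSumOfFintype ι n).symm

theorem add_single_mem_collusionProofProfiles {y : ι → ℕ} {w : ι} {n : ℕ}
    (hy : y ∈ scoreProfiles ι n) (hw : ∀ i, y i ≤ y w) (c : ℕ) :
    (y + Pi.single w (c + 1) : ι → ℕ) ∈ collusionProofProfiles ι c (n + (c + 1)) := by
  refine ⟨?_, w, add_single_leads hw c⟩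
  simp only [Pi.add_apply, sum_add_distrib, sum_pi_single', mem_univ, if_true]
  rw [hy]

theorem ncard_scoreProfiles_le_ncard_collusionProofProfiles [Nonempty ι] (c n : ℕ) :
    (scoreProfiles ι n).ncard ≤ (collusionProofProfiles ι c (n + (c + 1))).ncard := by
  choose w hw using fun y : ι → ℕ => Finite.exists_max y
  refine Set.ncard_le_ncard_of_injOn (fun y => (y + Pi.single (w y) (c + 1) : ι → ℕ))
    (fun y hy => add_single_mem_collusionProofProfiles hy (hw y) c) ?_
    ((scoreProfiles_finite _).subset fun x hx => hx.1)
  intro y _ y' _ h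
  simp only at h
  have strict {y : ι → ℕ} : ∀ i, i ≠ w y →
      (y + Pi.single (w y) (c + 1) : ι → ℕ) i <
        (y + Pi.single (w y) (c + 1) : ι → ℕ) (w y) :=
    fun i hi => Nat.lt_of_lt_of_le (by omega) (add_single_leads (hw y) c i hi)
  have hleader : w y = w y' := eq_of_forall_ne_lt (strict (y := y)) (by rw [h]; exact strict)
  rw [hleader] at h
  exact add_right_cancel h

end Profiles

/-- For plurality with `m ≥ 1` candidates, `n` voters and coalition size `c` with
`c + 1 ≤ n`, the fraction of scoring profiles in which some candidate leads every other
candidate by at least `c + 1` is at least `((n - c)/(n + 1))^(m-1)`. -/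
theorem plurality_collusion_proof_fraction (m c n : ℕ) (hm : 1 ≤ m) (hcn : c + 1 ≤ n) :
    (((n : ℝ) - c) / ((n : ℝ) + 1)) ^ (m - 1) ≤
      (({x : Fin m → ℕ | (∑ i, x i) = n ∧
          ∃ w : Fin m, ∀ i : Fin m, i ≠ w → x i + c + 1 ≤ x w}).ncard : ℝ) /
        (Nat.choose (n + m - 1) (m - 1) : ℝ) := by
  obtain ⟨k, rfl⟩ : ∃ k, m = k + 1 := ⟨m - 1, by omega⟩
  obtain ⟨a, rfl⟩ : ∃ a, n = a + (c + 1) := ⟨n - (c + 1), by omega⟩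
  have hcount : (a + k).choose k ≤ (collusionProofProfiles (Fin (k + 1)) c (a + (c + 1))).ncard :=
    calc (a + k).choose k = (scoreProfiles (Fin (k + 1)) a).ncard := by
          rw [ncard_scoreProfiles, Fintype.card_fin, show k + 1 + a - 1 = a + k by omega,
            Nat.choose_symm_add]
      _ ≤ _ := ncard_scoreProfiles_le_ncard_collusionProofProfiles c a
  have hratio := Nat.succ_pow_mul_add_choose_le (a.le_add_right (c + 1)) k
  rw [Nat.add_sub_cancel, Nat.add_succ_sub_one,
    show ((a + (c + 1) : ℕ) : ℝ) - c = a + 1 by push_cast; ring, div_pow,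
    div_le_div_iff₀ (by positivity) (mod_cast Nat.choose_pos (by omega))]
  exact_mod_cast hratio.trans (Nat.mul_le_mul_right _ hcount)
end

section
/- Fix m ≥ 2 and let (c_n)_{n∈ℕ} be a sequence of natural numbers with c_n/n → 0. For each n, let A_n be the set of vectors x = (x_1,…,x_m) ∈ ℕ^m with x_1 + ⋯ + x_m = n such that there exists an index w with x_w − x_i ≥ c_n + 1 for every i ≠ w. Then lim_{n→∞} |A_n| / C(n+m−1, m−1) = 1. -/
/-!
A profile in which no candidate leads every other one by more than `c` has two candidates
`i ≠ j` with `x j = x i + d` for some `d ≤ c` (take `j` a maximal candidate). For fixed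
`(i, j, d)`, merging the votes of `j` into `i` is injective on such profiles, so they are at
most as many as the profiles with `m - 1` candidates, which form a fraction
`(m - 1) / (n + m - 1)` of all profiles. Hence the bad profiles form a fraction
`O((c + 1) / n)`, which tends to `0` when `c = o(n)`.
-/

open Finset Finset.Nat Filter Topology

theorem Nat.multichoose_mul_add_eq_mul_multichoose_succ (k n : ℕ) :
    k.multichoose n * (n + k) = k * (k + 1).multichoose n := by
  rcases k with _ | j
  · cases n <;> simp
  · have := Nat.add_one_mul_choose_eq (j + n) j
    rw [Nat.multichoose_eq, Nat.multichoose_eq, show j + 1 + n - 1 = j + n by omega,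
      show j + 1 + 1 + n - 1 = j + n + 1 by omega, ← Nat.choose_symm_add,
      Nat.choose_symm_of_eq_add (show j + n + 1 = n + (j + 1) by omega)]
    linarith

theorem Finset.card_filter_div_card_eq_one_sub {α K : Type*} [DivisionRing K] [CharZero K]
    {s : Finset α} (hs : s.Nonempty) (p : α → Prop) [DecidablePred p] :
    (#{x ∈ s | p x} : K) / #s = 1 - #{x ∈ s | ¬ p x} / #s := by
  have hs' : (#s : K) ≠ 0 := by exact_mod_cast hs.card_pos.ne'
  rw [eq_sub_iff_add_eq, ← add_div, ← Nat.cast_add, card_filter_add_card_filter_not, div_self hs']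

namespace Finset.Nat

theorem card_antidiagonalTuple (k n : ℕ) : #(antidiagonalTuple k n) = k.multichoose n := by
  rw [← Nat.card_eq_finsetCard, ← Sym.card_sym_fin_eq_multichoose, ← Nat.card_eq_fintype_card]
  exact Nat.card_congr ((Sym.equivNatSumOfFintype _ _).trans
    (Equiv.subtypeEquivRight fun _ => mem_antidiagonalTuple.symm)).symm

theorem card_antidiagonalTuple_eq_choose {m : ℕ} (hm : m ≠ 0) (n : ℕ) :
    #(antidiagonalTuple m n) = (n + m - 1).choose (m - 1) := by
  obtain ⟨k, rfl⟩ := Nat.exists_eq_succ_of_ne_zero hm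
  rw [card_antidiagonalTuple, Nat.multichoose_eq, Nat.succ_sub_one, Nat.add_succ_sub_one,
    Nat.succ_add_sub_one, add_comm k, Nat.choose_symm_add]

theorem card_filter_antidiagonalTuple_eq_add_le {k n d : ℕ} {i j : Fin (k + 1)} (hij : i ≠ j) :
    #{x ∈ antidiagonalTuple (k + 1) n | x j = x i + d} ≤ #(antidiagonalTuple k n) := by
  refine card_le_card_of_injOn (fun x => (x + Pi.single i (x j)) ∘ j.succAbove) ?_ ?_
  · intro x hx
    rw [mem_coe, mem_filter, mem_antidiagonalTuple] at hx
    have hsum : ∑ s, (x + Pi.single i (x j) : Fin (k + 1) → ℕ) s = n + x j := by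
      simp [sum_add_distrib, hx.1]
    have hj : (x + Pi.single i (x j) : Fin (k + 1) → ℕ) j = x j := by simp [hij.symm]
    rw [Fin.sum_univ_succAbove _ j, hj] at hsum
    rw [mem_coe, mem_antidiagonalTuple]
    simp only [Function.comp_apply]
    omega
  · intro x hx y hy hxy
    rw [mem_coe, mem_filter] at hx hy
    have hne : ∀ s, s ≠ j → x s + (Pi.single i (x j) : Fin (k + 1) → ℕ) s =
        y s + (Pi.single i (y j) : Fin (k + 1) → ℕ) s := by
      intro s hs
      obtain ⟨t, rfl⟩ := Fin.exists_succAbove_eq hs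
      exact congrFun hxy t
    have hi : x i = y i := by
      have := hne i hij
      simp only [Pi.single_eq_same] at this
      omega
    funext s
    by_cases hsj : s = j
    · subst hsj; omega
    · by_cases hsi : s = i
      · exact hsi ▸ hi
      · simpa [Pi.single_eq_of_ne hsi] using hne s hsj

theorem ncard_setOf_sum_eq_and {k n : ℕ} (p : (Fin k → ℕ) → Prop) [DecidablePred p] :
    {x : Fin k → ℕ | ∑ i, x i = n ∧ p x}.ncard = #{x ∈ antidiagonalTuple k n | p x} := by
  rw [← Set.ncard_coe_finset, coe_filter]
  simp only [mem_antidiagonalTuple]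

end Finset.Nat

def WinsByMoreThan {ι : Type*} (c : ℕ) (x : ι → ℕ) : Prop :=
  ∃ w, ∀ i, i ≠ w → x i + c < x w

instance {ι : Type*} [Fintype ι] [DecidableEq ι] (c : ℕ) (x : ι → ℕ) :
    Decidable (WinsByMoreThan c x) :=
  inferInstanceAs (Decidable (∃ w, ∀ i, i ≠ w → x i + c < x w))

theorem exists_ne_eq_add_of_not_winsByMoreThan {ι : Type*} [Finite ι] [Nonempty ι] {c : ℕ}
    {x : ι → ℕ} (hx : ¬ WinsByMoreThan c x) : ∃ i j, i ≠ j ∧ ∃ d ≤ c, x j = x i + d := by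
  obtain ⟨w, hw⟩ := Finite.exists_max x
  simp only [WinsByMoreThan, not_exists, not_forall, not_lt] at hx
  obtain ⟨i, hiw, hle⟩ := hx w
  exact ⟨i, w, hiw, x w - x i, by omega, by have := hw i; omega⟩

theorem card_filter_not_winsByMoreThan_le (k n c : ℕ) :
    #{x ∈ antidiagonalTuple (k + 1) n | ¬ WinsByMoreThan c x} ≤
      (k + 1) ^ 2 * (c + 1) * k.multichoose n := by
  let closePairs (p : (Fin (k + 1) × Fin (k + 1)) × ℕ) :=
    {x ∈ antidiagonalTuple (k + 1) n | x p.1.2 = x p.1.1 + p.2}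
  have hsub : {x ∈ antidiagonalTuple (k + 1) n | ¬ WinsByMoreThan c x} ⊆
      (univ.offDiag ×ˢ range (c + 1)).biUnion closePairs := by
    intro x hx
    rw [mem_filter] at hx
    obtain ⟨i, j, hij, d, hd, hxd⟩ := exists_ne_eq_add_of_not_winsByMoreThan hx.2
    simp only [mem_biUnion, mem_product, mem_offDiag, mem_range]
    exact ⟨((i, j), d), ⟨⟨mem_univ _, mem_univ _, hij⟩, by omega⟩, mem_filter.2 ⟨hx.1, hxd⟩⟩
  have hoff : #(univ : Finset (Fin (k + 1))).offDiag ≤ (k + 1) ^ 2 := by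
    rw [offDiag_card, card_univ, Fintype.card_fin, sq]
    exact Nat.sub_le _ _
  calc _ ≤ #((univ.offDiag ×ˢ range (c + 1)).biUnion closePairs) := card_le_card hsub
    _ ≤ #(univ.offDiag ×ˢ range (c + 1)) * #(antidiagonalTuple k n) :=
        card_biUnion_le_card_mul _ _ _ fun p hp =>
          card_filter_antidiagonalTuple_eq_add_le (mem_offDiag.1 (mem_product.1 hp).1).2.2
    _ ≤ (k + 1) ^ 2 * (c + 1) * k.multichoose n := by
        rw [card_product, card_range, card_antidiagonalTuple]
        gcongr

theorem card_filter_not_winsByMoreThan_div_le (k c : ℕ) {n : ℕ} (hn : n ≠ 0) :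
    (#{x ∈ antidiagonalTuple (k + 1) n | ¬ WinsByMoreThan c x} : ℝ) /
        #(antidiagonalTuple (k + 1) n) ≤ (k + 1) ^ 2 * k * (c + 1) / n := by
  have hpos : 0 < #(antidiagonalTuple (k + 1) n) := by
    rw [card_antidiagonalTuple, Nat.multichoose_eq]
    exact Nat.choose_pos (by omega)
  have key : #{x ∈ antidiagonalTuple (k + 1) n | ¬ WinsByMoreThan c x} * n ≤
      (k + 1) ^ 2 * k * (c + 1) * #(antidiagonalTuple (k + 1) n) :=
    calc _ ≤ #{x ∈ antidiagonalTuple (k + 1) n | ¬ WinsByMoreThan c x} * (n + k) :=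
          Nat.mul_le_mul_left _ (Nat.le_add_right n k)
      _ ≤ (k + 1) ^ 2 * (c + 1) * k.multichoose n * (n + k) :=
          Nat.mul_le_mul_right _ (card_filter_not_winsByMoreThan_le k n c)
      _ = (k + 1) ^ 2 * k * (c + 1) * #(antidiagonalTuple (k + 1) n) := by
          rw [card_antidiagonalTuple, mul_assoc, Nat.multichoose_mul_add_eq_mul_multichoose_succ]
          ring
  rw [div_le_div_iff₀ (by exact_mod_cast hpos) (by exact_mod_cast Nat.pos_of_ne_zero hn)]
  exact_mod_cast key

/-- Plurality is asymptotically `o(n)`-collusion-proof on the number of voters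
under the ISC assumption: if `c n / n → 0`, the fraction of scoring profiles with `n` voters
and `m ≥ 2` candidates in which some candidate leads every other candidate by at least
`c n + 1` tends to `1` as `n → ∞`. -/
theorem plurality_asymptotically_collusion_proof_on_voters (m : ℕ) (hm : 2 ≤ m)
    (c : ℕ → ℕ)
    (hc : Filter.Tendsto (fun n : ℕ => (c n : ℝ) / (n : ℝ)) Filter.atTop (nhds 0)) :
    Filter.Tendsto
      (fun n : ℕ =>
        (({x : Fin m → ℕ | (∑ i, x i) = n ∧
            ∃ w : Fin m, ∀ i : Fin m, i ≠ w → x i + c n + 1 ≤ x w}).ncard : ℝ) /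
          (Nat.choose (n + m - 1) (m - 1) : ℝ))
      Filter.atTop (nhds 1) := by
  obtain ⟨k, rfl⟩ : ∃ k, m = k + 1 := ⟨m - 1, by omega⟩
  have hbad : Tendsto (fun n => (#{x ∈ antidiagonalTuple (k + 1) n | ¬ WinsByMoreThan (c n) x} : ℝ)
      / #(antidiagonalTuple (k + 1) n)) atTop (𝓝 0) := by
    refine squeeze_zero' (Eventually.of_forall fun n => by positivity)
      ((eventually_ne_atTop 0).mono fun n hn => card_filter_not_winsByMoreThan_div_le k (c n) hn) ?_
    simp only [mul_div_assoc, add_div]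
    simpa using (hc.add tendsto_one_div_atTop_nhds_zero_nat).const_mul (((k : ℝ) + 1) ^ 2 * k)
  have hgood := (tendsto_const_nhds (x := (1 : ℝ))).sub hbad
  rw [sub_zero] at hgood
  refine hgood.congr fun n => ?_
  have hprofiles : (antidiagonalTuple (k + 1) n).Nonempty := by
    rw [← card_pos, card_antidiagonalTuple_eq_choose k.add_one_ne_zero]
    exact Nat.choose_pos (by omega)
  -- On `ℕ`, `a < b` unfolds to `a + 1 ≤ b`.
  change _ = (({x | ∑ i, x i = n ∧ WinsByMoreThan (c n) x} : Set (Fin (k + 1) → ℕ)).ncard : ℝ) / _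
  rw [ncard_setOf_sum_eq_and, ← card_antidiagonalTuple_eq_choose k.add_one_ne_zero,
    card_filter_div_card_eq_one_sub hprofiles (WinsByMoreThan (c n))]
end

section
/- Let n ≥ 1 and m > n. Let E be the set of vectors x = (x_1,…,x_m) ∈ ℕ^m with x_1 + ⋯ + x_m = n such that |x_i − x_j| ≤ 1 for all 1 ≤ i, j ≤ m. Then |E| = C(m, n) and |E| / C(m+n−1, m−1) ≥ ((m−n+1)/m)^n. -/
open Finset

lemma desc_ineq (n m : ℕ) (hm : n < m) :
    (m - n + 1) ^ n * (m + n - 1).descFactorial n ≤ m ^ n * m.descFactorial n := by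
  rw [Nat.descFactorial_eq_prod_range, Nat.descFactorial_eq_prod_range]
  have key : ∏ i ∈ range n, ((m - n + 1) * (m + n - 1 - i)) ≤
      ∏ i ∈ range n, (m * (m - i)) := by
    apply Finset.prod_le_prod'
    intro i hi
    simp only [Finset.mem_range] at hi
    have h2 : n ≤ m := le_of_lt hm
    zify [h2, Nat.le_sub_one_of_lt (by omega : i < m + n), (by omega : i ≤ m)]
    have hi' : (i : ℤ) ≤ (n : ℤ) - 1 := by
      have : (i : ℤ) < n := by exact_mod_cast hi
      omega
    have hnm : (n : ℤ) ≤ m := by exact_mod_cast h2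
    have h3 : ((m + n - 1 : ℕ) : ℤ) = (m : ℤ) + n - 1 := by omega
    rw [h3]
    nlinarith [hnm, hi']
  simpa [Finset.prod_mul_distrib, Finset.prod_const, Finset.card_range] using key

lemma choose_ineq (n m : ℕ) (hm : n < m) :
    (m - n + 1) ^ n * (m + n - 1).choose n ≤ m ^ n * m.choose n := by
  have h := desc_ineq n m hm
  rw [Nat.descFactorial_eq_factorial_mul_choose, Nat.descFactorial_eq_factorial_mul_choose] at h
  refine Nat.le_of_mul_le_mul_left ?_ (Nat.factorial_pos n)
  calc Nat.factorial n * ((m - n + 1) ^ n * (m + n - 1).choose n)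
      = (m - n + 1) ^ n * (Nat.factorial n * (m + n - 1).choose n) := by ring
    _ ≤ m ^ n * (Nat.factorial n * m.choose n) := h
    _ = Nat.factorial n * (m ^ n * m.choose n) := by ring

/-- For `n ≥ 1` and `m > n`, the set `E` of plurality scoring profiles with all
pairwise score differences at most `1` has cardinality `C(m, n)`, and its fraction among all
scoring profiles is at least `((m - n + 1)/m)^n`. -/
theorem plurality_almost_equal_profiles (n m : ℕ) (hn : 1 ≤ n) (hm : n < m) :
    ({x : Fin m → ℕ | (∑ i, x i) = n ∧
        ∀ i j : Fin m, |(x i : ℤ) - (x j : ℤ)| ≤ 1}).ncard = Nat.choose m n ∧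
      (((m : ℝ) - n + 1) / (m : ℝ)) ^ n ≤
        (({x : Fin m → ℕ | (∑ i, x i) = n ∧
            ∀ i j : Fin m, |(x i : ℤ) - (x j : ℤ)| ≤ 1}).ncard : ℝ) /
          (Nat.choose (m + n - 1) (m - 1) : ℝ) := by
  set E := {x : Fin m → ℕ | (∑ i, x i) = n ∧
        ∀ i j : Fin m, |(x i : ℤ) - (x j : ℤ)| ≤ 1} with hE
  set S : Finset (Fin m → ℕ) :=
    (Finset.powersetCard n (univ : Finset (Fin m))).image
      (fun s i => if i ∈ s then 1 else 0) with hS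
  have hES : E = ↑S := by
    ext x
    simp only [hE, hS, Set.mem_setOf_eq, Finset.coe_image, Set.mem_image, Finset.mem_coe,
      Finset.mem_powersetCard_univ]
    constructor
    · rintro ⟨hsum, hdiff⟩
      -- all entries ≤ 1
      have hle : ∀ i, x i ≤ 1 := by
        by_contra h
        push_neg at h
        obtain ⟨i, hi⟩ := h
        have hall : ∀ j, 1 ≤ x j := by
          intro j
          have := hdiff i j
          rw [abs_le] at this
          omega
        have : (m : ℕ) ≤ ∑ j, x j := by
          calc (m : ℕ) = ∑ _j : Fin m, 1 := by simp
            _ ≤ ∑ j, x j := Finset.sum_le_sum fun j _ => hall j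
        omega
      refine ⟨univ.filter (fun i => x i = 1), ?_, ?_⟩
      · have : ∑ i, x i = (univ.filter (fun i => x i = 1)).card := by
          rw [Finset.card_filter]
          apply Finset.sum_congr rfl
          intro i _
          have := hle i
          interval_cases h : x i <;> simp
        omega
      · funext i
        simp only [Finset.mem_filter, Finset.mem_univ, true_and]
        have := hle i
        interval_cases h : x i <;> simp
    · rintro ⟨s, hcard, rfl⟩
      constructor
      · rw [Finset.sum_ite_mem, Finset.univ_inter, Finset.sum_const, hcard]
        simp
      · intro i j
        rcases em (i ∈ s) with h1 | h1 <;> rcases em (j ∈ s) with h2 | h2 <;>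
          simp [h1, h2]
  have hcardS : S.card = Nat.choose m n := by
    rw [hS, Finset.card_image_of_injOn, Finset.card_powersetCard, Finset.card_univ,
      Fintype.card_fin]
    intro s hs t ht hst
    ext i
    have := congrFun hst i
    by_cases h1 : i ∈ s <;> by_cases h2 : i ∈ t <;> simp_all
  have hcard : E.ncard = Nat.choose m n := by
    rw [hES, Set.ncard_coe_finset, hcardS]
  refine ⟨hcard, ?_⟩
  rw [hcard]
  have hsymm : (m + n - 1).choose (m - 1) = (m + n - 1).choose n :=
    Nat.choose_symm_of_eq_add (by omega)
  rw [hsymm]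
  have hm0 : (0 : ℝ) < m := by exact_mod_cast (by omega : 0 < m)
  have hc0 : (0 : ℝ) < ((m + n - 1).choose n : ℝ) := by
    exact_mod_cast Nat.choose_pos (by omega)
  rw [div_pow, div_le_div_iff₀ (pow_pos hm0 n) hc0]
  have key := choose_ineq n m hm
  have hcast : ((m : ℝ) - n + 1) = ((m - n + 1 : ℕ) : ℝ) := by
    push_cast [Nat.cast_sub hm.le]
    ring
  rw [hcast]
  calc ((m - n + 1 : ℕ) : ℝ) ^ n * ((m + n - 1).choose n : ℝ)
      = (((m - n + 1) ^ n * (m + n - 1).choose n : ℕ) : ℝ) := by push_cast; ring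
    _ ≤ (((m ^ n * m.choose n : ℕ)) : ℝ) := by exact_mod_cast key
    _ = (m.choose n : ℝ) * (m : ℝ) ^ n := by push_cast; ring
end

section
/- Let 1 ≤ k and n·k ≤ m. Then m! · ((m−k)!)^n / ((m−nk)! · (m!)^n) ≥ ((m−nk+1)/m)^{nk}, as an inequality of real numbers. -/
/-!
Since `(m - r)! * m.descFactorial r = m!`, the ratio equals
`m.descFactorial (n * k) / (m.descFactorial k) ^ n`. Its numerator is a product of `n * k`
factors each at least `m - n * k + 1`, and its denominator a product of `n * k` factors each
at most `m`.
-/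

open Nat

theorem factorial_ratio_eq_descFactorial_div {K : Type*} [Field K] [CharZero K] {m n k : ℕ}
    (hkm : k ≤ m) (hnk : n * k ≤ m) :
    ((m ! : K) * ((m - k)! : K) ^ n) / (((m - n * k)! : K) * (m ! : K) ^ n) =
      (m.descFactorial (n * k) : K) / (m.descFactorial k : K) ^ n := by
  have hk_fact : ((m - k)! : K) * m.descFactorial k = m ! := by
    exact_mod_cast factorial_mul_descFactorial hkm
  have hnk_fact : ((m - n * k)! : K) * m.descFactorial (n * k) = m ! := by
    exact_mod_cast factorial_mul_descFactorial hnk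
  have hk_pow := congrArg (· ^ n) hk_fact
  have hdk : (m.descFactorial k : K) ≠ 0 := by exact_mod_cast (descFactorial_pos.2 hkm).ne'
  rw [div_eq_div_iff (by simp [factorial_ne_zero]) (pow_ne_zero n hdk)]
  linear_combination (m ! : K) * hk_pow - (m ! : K) ^ n * hnk_fact

theorem descFactorial_pow_le_pow_mul (m n k : ℕ) : m.descFactorial k ^ n ≤ m ^ (n * k) := by
  rw [mul_comm, pow_mul]
  exact Nat.pow_le_pow_left (descFactorial_le_pow m k) n

theorem kapproval_fraction_lower_bound_general (m n k : ℕ) (hnk : n * k ≤ m) :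
    (((m : ℝ) - (n * k : ℕ) + 1) / (m : ℝ)) ^ (n * k) ≤
      ((Nat.factorial m : ℝ) * (Nat.factorial (m - k) : ℝ) ^ n) /
        ((Nat.factorial (m - n * k) : ℝ) * (Nat.factorial m : ℝ) ^ n) := by
  rcases n.eq_zero_or_pos with rfl | hn
  · simp [factorial_ne_zero]
  have hkm : k ≤ m := (Nat.le_mul_of_pos_left k hn).trans hnk
  have hbase : (m : ℝ) - (n * k : ℕ) + 1 = ((m + 1 - n * k : ℕ) : ℝ) := by
    rw [Nat.cast_sub (by omega)]
    push_cast
    ring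
  rw [factorial_ratio_eq_descFactorial_div hkm hnk, hbase, div_pow]
  apply div_le_div₀ (by positivity)
  · exact_mod_cast pow_sub_le_descFactorial m (n * k)
  · exact_mod_cast pow_pos (descFactorial_pos.2 hkm) n
  · exact_mod_cast descFactorial_pow_le_pow_mul m n k

/-- For `1 ≤ k` and `n·k ≤ m`, as real numbers,
`m!·((m-k)!)^n / ((m-nk)!·(m!)^n) ≥ ((m - nk + 1)/m)^(nk)`. -/
theorem kapproval_fraction_lower_bound (m n k : ℕ) (hk : 1 ≤ k) (hnk : n * k ≤ m) :
    (((m : ℝ) - (n * k : ℕ) + 1) / (m : ℝ)) ^ (n * k) ≤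
      ((Nat.factorial m : ℝ) * (Nat.factorial (m - k) : ℝ) ^ n) /
        ((Nat.factorial (m - n * k) : ℝ) * (Nat.factorial m : ℝ) ^ n) :=
  kapproval_fraction_lower_bound_general m n k hnk
end

section
/- Fix m ≥ 2, k with 1 ≤ k ≤ m−1, and set l = C(m−1, k−1). Let (c_n)_{n∈ℕ} be a sequence of natural numbers with c_n/n → 0. Define f(N) = Σ_{i=0}^{k} (−1)^i · C(N·(k−i) + m − 1, m − 1) for N ∈ ℕ. Then lim_{n→∞} f(n − l·c_n) / f(n) = 1 (the subtraction n − l·c_n is eventually nonnegative since c_n = o(n)). -/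
/-- The claimed number of `k`-approval scoring profiles with `N` voters and `m` candidates. -/
def kApprovalScoringCount (m k N : ℕ) : ℤ :=
  ∑ i ∈ Finset.range (k + 1),
    (-1 : ℤ) ^ i * (Nat.choose (N * (k - i) + m - 1) (m - 1) : ℤ)

/-!
Each binomial coefficient `C(N (k - i) + m - 1, m - 1)` grows like `((k - i) N)^(m-1) / (m-1)!`,
so along any sequence `N_n` with `N_n / n → s` one gets
`f(N_n) / n^(m-1) → s^(m-1) A / (m-1)!`, where `A = Σ_{i ≤ k} (-1)^i (k - i)^(m-1)`.
The alternating sum satisfies `A_{k+1} = (k+1)^(m-1) - A_k`, which gives `0 ≤ A_k ≤ k^(m-1)` and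
then `A_k > 0` for `k ≥ 1`. Since `(n - l c_n) / n → 1`, numerator and denominator of the ratio
have the same nonzero limit after dividing both by `n^(m-1)`.
-/

open Filter Finset Topology
open scoped Nat

theorem Nat.choose_add_mul_factorial (b r : ℕ) :
    (b + r).choose r * r ! = ∏ i ∈ range r, (b + 1 + i) := by
  rw [mul_comm, ← ascFactorial_eq_factorial_mul_choose, ascFactorial_eq_prod_range]

theorem tendsto_choose_add_div_pow {b : ℕ → ℕ} {s : ℝ} (r : ℕ)
    (hb : Tendsto (fun n ↦ (b n : ℝ) / n) atTop (𝓝 s)) :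
    Tendsto (fun n ↦ ((b n + r).choose r : ℝ) / (n : ℝ) ^ r) atTop (𝓝 (s ^ r / r !)) := by
  have hfactor : ∀ i : ℕ, Tendsto (fun n ↦ ((b n : ℝ) + 1 + i) / n) atTop (𝓝 s) := fun i ↦ by
    simpa [add_div, add_assoc] using hb.add (tendsto_const_div_atTop_nhds_zero_nat (1 + i : ℝ))
  have hprod := (tendsto_finsetProd (range r) fun i _ ↦ hfactor i).div_const (r ! : ℝ)
  rw [prod_const, card_range] at hprod
  refine hprod.congr fun n ↦ ?_
  have hcast : ((b n + r).choose r * r ! : ℝ) = ∏ i ∈ range r, ((b n : ℝ) + 1 + i) := by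
    exact_mod_cast Nat.choose_add_mul_factorial (b n) r
  rw [prod_div_distrib, prod_const, card_range, ← hcast, div_right_comm,
    mul_div_cancel_right₀ _ (by positivity)]

def alternatingPowSum (r k : ℕ) : ℝ :=
  ∑ i ∈ range (k + 1), (-1) ^ i * ((k - i : ℕ) : ℝ) ^ r

theorem alternatingPowSum_zero {r : ℕ} (hr : r ≠ 0) : alternatingPowSum r 0 = 0 := by
  simp [alternatingPowSum, hr]

theorem alternatingPowSum_succ (r k : ℕ) :
    alternatingPowSum r (k + 1) = ((k + 1 : ℕ) : ℝ) ^ r - alternatingPowSum r k := by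
  simp only [alternatingPowSum, sum_range_succ' _ (k + 1), pow_succ, Nat.add_sub_add_right]
  simp only [mul_neg, mul_one, neg_mul, sum_neg_distrib, pow_zero, tsub_zero, Nat.cast_add,
    Nat.cast_one, one_mul]
  ring

theorem alternatingPowSum_mem_Icc {r : ℕ} (hr : r ≠ 0) (k : ℕ) :
    alternatingPowSum r k ∈ Set.Icc 0 ((k : ℝ) ^ r) := by
  induction k with
  | zero => simp [alternatingPowSum_zero hr, hr]
  | succ k ih =>
    have hmono : (k : ℝ) ^ r ≤ ((k + 1 : ℕ) : ℝ) ^ r := by gcongr; omega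
    rw [alternatingPowSum_succ]
    constructor <;> linarith [ih.1, ih.2]

theorem alternatingPowSum_pos {r k : ℕ} (hr : r ≠ 0) (hk : k ≠ 0) :
    0 < alternatingPowSum r k := by
  obtain ⟨k, rfl⟩ := Nat.exists_eq_succ_of_ne_zero hk
  have hmono : (k : ℝ) ^ r < ((k + 1 : ℕ) : ℝ) ^ r := by gcongr; omega
  rw [alternatingPowSum_succ]
  linarith [(alternatingPowSum_mem_Icc hr k).2]

theorem tendsto_kApprovalScoringCount_div_pow {m : ℕ} (hm : m ≠ 0) (k : ℕ) {b : ℕ → ℕ} {s : ℝ}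
    (hb : Tendsto (fun n ↦ (b n : ℝ) / n) atTop (𝓝 s)) :
    Tendsto (fun n ↦ (kApprovalScoringCount m k (b n) : ℝ) / (n : ℝ) ^ (m - 1)) atTop
      (𝓝 (s ^ (m - 1) * alternatingPowSum (m - 1) k / (m - 1)!)) := by
  have hterm : ∀ i : ℕ, Tendsto
      (fun n ↦ (((b n * (k - i) + (m - 1)).choose (m - 1) : ℕ) : ℝ) / (n : ℝ) ^ (m - 1))
      atTop (𝓝 ((s * (k - i : ℕ)) ^ (m - 1) / (m - 1)!)) := fun i ↦
    tendsto_choose_add_div_pow (m - 1)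
      (by simpa [mul_div_right_comm] using hb.mul_const ((k - i : ℕ) : ℝ))
  have hsum := tendsto_finsetSum (range (k + 1)) fun i _ ↦ (hterm i).const_mul ((-1 : ℝ) ^ i)
  convert hsum using 1
  · ext n
    simp only [kApprovalScoringCount, Nat.add_sub_assoc (Nat.one_le_iff_ne_zero.2 hm)]
    push_cast
    rw [sum_div]
    simp only [mul_div_assoc]
  · simp only [alternatingPowSum, mul_pow, mul_sum, sum_div]
    exact congrArg 𝓝 (sum_congr rfl fun i _ ↦ by ring)

theorem tendsto_cast_sub_div_self {a : ℕ → ℕ} (ha : Tendsto (fun n ↦ (a n : ℝ) / n) atTop (𝓝 0)) :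
    Tendsto (fun n ↦ ((n - a n : ℕ) : ℝ) / n) atTop (𝓝 1) := by
  have hlower : ∀ᶠ n : ℕ in atTop, 1 - (a n : ℝ) / n ≤ ((n - a n : ℕ) : ℝ) / n := by
    filter_upwards [eventually_gt_atTop 0] with n hn
    rw [one_sub_div (by positivity), div_le_div_iff_of_pos_right (by positivity)]
    rcases le_total (a n) n with h | h
    · rw [Nat.cast_sub h]
    · rw [Nat.sub_eq_zero_of_le h]; simpa using h
  have hupper : ∀ n : ℕ, ((n - a n : ℕ) : ℝ) / n ≤ 1 := fun n ↦
    div_le_one_of_le₀ (by exact_mod_cast n.sub_le (a n)) n.cast_nonneg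
  exact tendsto_of_tendsto_of_tendsto_of_le_of_le' (by simpa using tendsto_const_nhds.sub ha)
    tendsto_const_nhds hlower (Eventually.of_forall hupper)

theorem kapproval_isc_collusion_ratio_tendsto_one_general (m k : ℕ) (hm : 2 ≤ m)
    (hk1 : 1 ≤ k) (c : ℕ → ℕ)
    (hc : Filter.Tendsto (fun n : ℕ => (c n : ℝ) / (n : ℝ)) Filter.atTop (nhds 0)) :
    Filter.Tendsto
      (fun n : ℕ =>
        ((kApprovalScoringCount m k (n - Nat.choose (m - 1) (k - 1) * c n) : ℝ)) /
          ((kApprovalScoringCount m k n : ℝ)))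
      Filter.atTop (nhds 1) := by
  set l := Nat.choose (m - 1) (k - 1)
  have hL : (1 : ℝ) ^ (m - 1) * alternatingPowSum (m - 1) k / (m - 1)! ≠ 0 := by
    have := alternatingPowSum_pos (r := m - 1) (k := k) (by omega) (by omega)
    positivity
  have hself : Tendsto (fun n : ℕ ↦ (n : ℝ) / n) atTop (𝓝 1) :=
    tendsto_const_nhds.congr' <|
      (eventually_gt_atTop 0).mono fun n hn ↦ (div_self (by positivity)).symm
  have hlc : Tendsto (fun n ↦ ((l * c n : ℕ) : ℝ) / n) atTop (𝓝 0) := by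
    simpa [mul_div_assoc] using hc.const_mul (l : ℝ)
  have hnum := tendsto_kApprovalScoringCount_div_pow (m := m) (by omega) k
    (tendsto_cast_sub_div_self hlc)
  have hden := tendsto_kApprovalScoringCount_div_pow (m := m) (by omega) k hself
  refine (div_self hL ▸ hnum.div hden hL).congr' ?_
  filter_upwards [eventually_gt_atTop 0] with n hn
  exact div_div_div_cancel_right₀ (by positivity) _ _

/-- Fix `m ≥ 2`, `1 ≤ k ≤ m - 1`, `l = C(m-1, k-1)`, and a sequence `c_n` with
`c_n / n → 0`. Then `f(n - l·c_n)/f(n) → 1` where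
`f(N) = Σ_{i=0}^{k} (-1)^i C(N(k-i)+m-1, m-1)`. -/
theorem kapproval_isc_collusion_ratio_tendsto_one (m k : ℕ) (hm : 2 ≤ m)
    (hk1 : 1 ≤ k) (hk2 : k ≤ m - 1) (c : ℕ → ℕ)
    (hc : Filter.Tendsto (fun n : ℕ => (c n : ℝ) / (n : ℝ)) Filter.atTop (nhds 0)) :
    Filter.Tendsto
      (fun n : ℕ =>
        ((kApprovalScoringCount m k (n - Nat.choose (m - 1) (k - 1) * c n) : ℝ)) /
          ((kApprovalScoringCount m k n : ℝ)))
      Filter.atTop (nhds 1) :=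
  kapproval_isc_collusion_ratio_tendsto_one_general m k hm hk1 c hc
end

section
/- Fix m ≥ 2 and let (c_n)_{n∈ℕ} be a sequence of natural numbers with c_n/n → 0. For each n, let A_n be the set of vectors x = (x_1,…,x_m) ∈ ℕ^m with x_1 + ⋯ + x_m = n such that there exists an index w with x_i − x_w ≥ c_n + 1 for every i ≠ w. Then lim_{n→∞} |A_n| / C(n+m−1, m−1) = 1. -/
/-!
By stars and bars there are `C(n+m-1, n)` profiles, and fixing one linear relation
`x i = x j + d` between two coordinates leaves at most `C(n+m-2, n)` of them, a fraction
`(m-1)/(n+m-1)` of all profiles. A profile without a candidate having at least `c+1` fewer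
vetoes than every other one has two candidates whose scores differ by some `d ≤ c`, so such profiles
form a fraction `O((c+1)/n)`, which tends to `0` when `c = o(n)`.
-/

open Finset Filter Topology

variable {α : Type*} [Fintype α]

theorem finite_setOf_sum_eq (n : ℕ) : {x : α → ℕ | ∑ i, x i = n}.Finite := by
  classical
  exact Set.finite_coe_iff.1 (.of_equiv _ (Sym.equivNatSumOfFintype α n))

theorem ncard_setOf_sum_eq (n : ℕ) :
    {x : α → ℕ | ∑ i, x i = n}.ncard = (Fintype.card α + n - 1).choose n := by
  classical
  rw [← Nat.card_coe_set_eq, Set.coe_ofPred, ← Nat.card_congr (Sym.equivNatSumOfFintype α n),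
    Nat.card_eq_fintype_card, Sym.card_sym_eq_choose]

theorem ncard_setOf_sum_eq_and_eq_add_le {i j : α} (hij : i ≠ j) (n d : ℕ) :
    {x : α → ℕ | ∑ k, x k = n ∧ x i = x j + d}.ncard ≤ (Fintype.card α + n - 2).choose n := by
  classical
  -- moving the vetoes of `i` onto `j` keeps the total, and `x j` is recovered from `2 * x j + d`
  let moveVotes (x : α → ℕ) (k : {k // k ≠ i}) : ℕ := x k + if (k : α) = j then x i else 0
  have hsum (x : α → ℕ) : ∑ k, moveVotes x k = ∑ k, x k := by
    have hmoved : ∑ k : {k // k ≠ i}, (if (k : α) = j then x i else 0) = x i := by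
      rw [Fintype.sum_eq_single ⟨j, hij.symm⟩ fun k hk ↦ if_neg fun h ↦ hk (Subtype.ext h),
        if_pos rfl]
    simp only [moveVotes, Finset.sum_add_distrib, hmoved, Fintype.sum_eq_add_sum_subtype_ne x i,
      add_comm]
  have hcard : Fintype.card {k // k ≠ i} = Fintype.card α - 1 := by
    simp [Fintype.card_subtype_compl]
  have hpos : 0 < Fintype.card α := Fintype.card_pos_iff.2 ⟨i⟩
  calc _ ≤ {y : {k // k ≠ i} → ℕ | ∑ k, y k = n}.ncard := by
        refine Set.ncard_le_ncard_of_injOn moveVotes ?_ ?_ (finite_setOf_sum_eq n)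
        · rintro x ⟨hx, -⟩
          simp [hsum, hx]
        · rintro x ⟨-, hx⟩ y ⟨-, hy⟩ hxy
          have hj : x j = y j := by
            have := congrFun hxy ⟨j, hij.symm⟩
            simp only [moveVotes, if_pos] at this
            omega
          funext k
          by_cases hki : k = i
          · subst hki; omega
          · have := congrFun hxy ⟨k, hki⟩
            simp only [moveVotes] at this
            split_ifs at this <;> omega
    _ = _ := by
        rw [ncard_setOf_sum_eq, hcard]
        congr 1
        omega

def HasMinByMargin (c : ℕ) (x : α → ℕ) : Prop :=
  ∃ w, ∀ i, i ≠ w → x w + c + 1 ≤ x i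

theorem exists_ne_eq_add_of_not_hasMinByMargin [Nonempty α] {c : ℕ} {x : α → ℕ}
    (hx : ¬ HasMinByMargin c x) : ∃ i j, i ≠ j ∧ ∃ d ≤ c, x i = x j + d := by
  obtain ⟨j, -, hj⟩ := Finset.exists_min_image univ x univ_nonempty
  simp only [HasMinByMargin, not_exists, not_forall] at hx
  obtain ⟨i, hij, hi⟩ := hx j
  exact ⟨i, j, hij, x i - x j, by omega, by have := hj i (mem_univ i); omega⟩

theorem ncard_setOf_sum_eq_and_not_hasMinByMargin_le [Nonempty α] (n c : ℕ) :
    {x : α → ℕ | ∑ i, x i = n ∧ ¬ HasMinByMargin c x}.ncard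
      ≤ Fintype.card α ^ 2 * (c + 1) * (Fintype.card α + n - 2).choose n := by
  classical
  let pairs : Finset ((α × α) × ℕ) := univ.offDiag ×ˢ range (c + 1)
  have hcover : {x : α → ℕ | ∑ i, x i = n ∧ ¬ HasMinByMargin c x}
      ⊆ ⋃ p ∈ pairs, {x : α → ℕ | ∑ k, x k = n ∧ x p.1.1 = x p.1.2 + p.2} := by
    rintro x ⟨hsum, hx⟩
    obtain ⟨i, j, hij, d, hd, hxij⟩ := exists_ne_eq_add_of_not_hasMinByMargin hx
    simp only [Set.mem_iUnion]
    exact ⟨((i, j), d), by simp [pairs, hij, Nat.lt_succ_of_le hd], hsum, hxij⟩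
  have hpairs : #pairs ≤ Fintype.card α ^ 2 * (c + 1) := by
    simp only [pairs, card_product, offDiag_card, card_univ, card_range]
    gcongr
    rw [sq]
    exact Nat.sub_le _ _
  calc _ ≤ (⋃ p ∈ pairs, {x : α → ℕ | ∑ k, x k = n ∧ x p.1.1 = x p.1.2 + p.2}).ncard :=
        Set.ncard_le_ncard hcover ((finite_setOf_sum_eq n).subset
          (Set.iUnion₂_subset fun _ _ _ hx ↦ hx.1))
    _ ≤ ∑ p ∈ pairs, {x : α → ℕ | ∑ k, x k = n ∧ x p.1.1 = x p.1.2 + p.2}.ncard :=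
        Finset.set_ncard_biUnion_le _ _
    _ ≤ ∑ _p ∈ pairs, (Fintype.card α + n - 2).choose n := by
        refine sum_le_sum fun p hp ↦ ncard_setOf_sum_eq_and_eq_add_le ?_ n p.2
        simp only [pairs, mem_product, mem_offDiag] at hp
        exact hp.1.2.2
    _ ≤ _ := by
        rw [sum_const, smul_eq_mul]
        gcongr

theorem ncard_setOf_sum_eq_and_not_hasMinByMargin_mul_le (hα : 2 ≤ Fintype.card α) (n c : ℕ) :
    {x : α → ℕ | ∑ i, x i = n ∧ ¬ HasMinByMargin c x}.ncard * n
      ≤ Fintype.card α ^ 3 * (c + 1) * (Fintype.card α + n - 1).choose n := by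
  have : Nonempty α := Fintype.card_pos_iff.1 (by omega)
  set m := Fintype.card α
  have hchoose : (m + n - 2).choose n * (m + n - 1) = (m + n - 1).choose n * (m - 1) := by
    have h := Nat.choose_mul_succ_eq (m + n - 2) n
    rwa [show m + n - 2 + 1 = m + n - 1 by omega, show m + n - 1 - n = m - 1 by omega] at h
  calc _ ≤ m ^ 2 * (c + 1) * (m + n - 2).choose n * (m + n - 1) :=
        Nat.mul_le_mul (ncard_setOf_sum_eq_and_not_hasMinByMargin_le n c) (by omega)
    _ = m ^ 2 * (c + 1) * (m - 1) * (m + n - 1).choose n := by rw [mul_assoc, hchoose]; ring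
    _ ≤ m ^ 2 * (c + 1) * m * (m + n - 1).choose n := by gcongr; omega
    _ = m ^ 3 * (c + 1) * (m + n - 1).choose n := by ring

theorem ncard_setOf_sum_eq_and_add_and_not (n : ℕ) (P : (α → ℕ) → Prop) :
    {x : α → ℕ | ∑ i, x i = n ∧ P x}.ncard + {x : α → ℕ | ∑ i, x i = n ∧ ¬ P x}.ncard
      = (Fintype.card α + n - 1).choose n := by
  rw [← ncard_setOf_sum_eq]
  exact Set.ncard_inter_add_ncard_sdiff_eq_ncard _ {x | P x} (finite_setOf_sum_eq n)

theorem tendsto_div_nhds_zero_of_mul_le {b t c : ℕ → ℕ} (K : ℕ)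
    (hb : ∀ n, b n * n ≤ K * (c n + 1) * t n)
    (hc : Tendsto (fun n ↦ (c n : ℝ) / n) atTop (𝓝 0)) :
    Tendsto (fun n ↦ (b n : ℝ) / t n) atTop (𝓝 0) := by
  have hbound : ∀ᶠ n : ℕ in atTop, (b n : ℝ) / t n ≤ K * ((c n : ℝ) / n + 1 / n) := by
    filter_upwards [eventually_gt_atTop 0] with n hn
    rcases Nat.eq_zero_or_pos (t n) with ht | ht
    · rw [ht, Nat.cast_zero, div_zero]
      positivity
    rw [← add_div, mul_div_assoc', div_le_div_iff₀ (by positivity) (by positivity)]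
    exact_mod_cast hb n
  have hlim : Tendsto (fun n : ℕ ↦ K * ((c n : ℝ) / n + 1 / n)) atTop (𝓝 0) := by
    simpa using (hc.add tendsto_one_div_atTop_nhds_zero_nat).const_mul (K : ℝ)
  exact squeeze_zero' (.of_forall fun n ↦ by positivity) hbound hlim

/-- Veto is asymptotically `o(n)`-collusion-proof on the number of voters under
the ISC assumption: if `c n / n → 0`, the fraction of veto scoring profiles with `n` voters
and `m ≥ 2` candidates in which some candidate has at least `c n + 1` fewer vetoes than
every other candidate tends to `1` as `n → ∞`. -/
theorem veto_asymptotically_collusion_proof_on_voters (m : ℕ) (hm : 2 ≤ m)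
    (c : ℕ → ℕ)
    (hc : Filter.Tendsto (fun n : ℕ => (c n : ℝ) / (n : ℝ)) Filter.atTop (nhds 0)) :
    Filter.Tendsto
      (fun n : ℕ =>
        (({x : Fin m → ℕ | (∑ i, x i) = n ∧
            ∃ w : Fin m, ∀ i : Fin m, i ≠ w → x w + c n + 1 ≤ x i}).ncard : ℝ) /
          (Nat.choose (n + m - 1) (m - 1) : ℝ))
      Filter.atTop (nhds 1) := by
  have hm' : 2 ≤ Fintype.card (Fin m) := by simpa using hm
  have hbad := tendsto_div_nhds_zero_of_mul_le _
    (fun n ↦ ncard_setOf_sum_eq_and_not_hasMinByMargin_mul_le hm' n (c n)) hc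
  refine (sub_zero (1 : ℝ) ▸ tendsto_const_nhds.sub hbad).congr fun n ↦ ?_
  have htotal : (n + m - 1).choose (m - 1) = (Fintype.card (Fin m) + n - 1).choose n := by
    rw [Fintype.card_fin, Nat.choose_symm_of_eq_add (show n + m - 1 = m - 1 + n by omega),
      Nat.add_comm m n]
  have hpos : 0 < (Fintype.card (Fin m) + n - 1).choose n := Nat.choose_pos (by simp; omega)
  have hsplit := ncard_setOf_sum_eq_and_add_and_not (α := Fin m) n (HasMinByMargin (c n))
  rw [htotal, eq_div_iff (by positivity), sub_mul, one_mul, div_mul_cancel₀ _ (by positivity),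
    ← hsplit, Nat.cast_add, add_sub_cancel_right]
  rfl
end

section
/- Let A_1, …, A_m be finite sets (subsets of some ambient type, each a finite set), and let A be the set of all elements that belong to at least two of the sets A_1, …, A_m (equivalently, A = {x : ∃ i ≠ j, x ∈ A_i and x ∈ A_j}). Then |A| = Σ_{r=2}^{m} (−1)^r (r−1) Σ_{I ⊆ {1,…,m}, |I|=r} |∩_{i∈I} A_i|. -/
/-!
Double counting: an element `x` of `⋃ A_i` lying in exactly `t` of the sets lies in exactly
`C(t, r)` of the `r`-fold intersections, so the right-hand side counts `x` with weight
`∑_{r ≥ 2} (-1)^r (r - 1) C(t, r) = 1 - [t = 0] - [t = 1]`, which is `1` if `t ≥ 2` and `0`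
otherwise. The last equality comes from `∑_r (-1)^r C(t, r) = [t = 0]` and
`∑_r (-1)^r r C(t, r) = -[t = 1]`, the latter via `r C(t, r) = t C(t - 1, r - 1)`.
-/

open Finset

theorem Int.alternating_sum_range_mul_choose (n : ℕ) :
    ∑ r ∈ Finset.range (n + 1), (-1 : ℤ) ^ r * r * n.choose r = if n = 1 then -1 else 0 := by
  cases n with
  | zero => simp
  | succ u =>
    have hterm : ∀ s ∈ Finset.range (u + 1), (-1 : ℤ) ^ (s + 1) * ((s + 1 : ℕ) : ℤ) *
        (u + 1).choose (s + 1) = -(u + 1 : ℤ) * ((-1) ^ s * u.choose s) := by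
      intro s _
      have h := Nat.add_one_mul_choose_eq u s
      zify at h
      push_cast
      rw [pow_succ]
      linear_combination (-1 : ℤ) ^ s * h
    rw [sum_range_succ', sum_congr rfl hterm, ← mul_sum, Int.alternating_sum_range_choose]
    by_cases hu : u = 0 <;> simp [hu]

theorem sum_Icc_two_neg_one_pow_mul_sub_one_mul_choose {n t : ℕ} (ht : t ≤ n) :
    ∑ r ∈ Icc 2 n, (-1 : ℤ) ^ r * ((r : ℤ) - 1) * t.choose r = if 2 ≤ t then 1 else 0 := by
  split_ifs with h2
  · have hfull : ∑ r ∈ range (t + 1), (-1 : ℤ) ^ r * ((r : ℤ) - 1) * t.choose r = 0 := by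
      simp only [mul_sub, sub_mul, mul_one, sum_sub_distrib,
        Int.alternating_sum_range_mul_choose, Int.alternating_sum_range_choose]
      simp [show t ≠ 1 by omega, show t ≠ 0 by omega]
    rw [← sum_range_add_sum_Ico _ (by omega : 2 ≤ t + 1)] at hfull
    have hvanish : ∀ r ∈ Icc 2 n, r ∉ Ico 2 (t + 1) →
        (-1 : ℤ) ^ r * ((r : ℤ) - 1) * t.choose r = 0 := by
      intro r hrn hrt
      rw [Nat.choose_eq_zero_of_lt (by simp at hrn hrt; omega)]
      simp
    rw [← sum_subset (fun r hr => by simp at hr ⊢; omega) hvanish]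
    have hlow : ∑ r ∈ range 2, (-1 : ℤ) ^ r * ((r : ℤ) - 1) * t.choose r = -1 := by
      simp [sum_range_succ]
    linarith
  · refine sum_eq_zero fun r hr => ?_
    rw [Nat.choose_eq_zero_of_lt (by simp at hr; omega)]
    simp

section DoubleCounting

variable {ι α : Type*} [DecidableEq α] (A : ι → Finset α)

theorem setOf_exists_ne_mem_mem_eq [Fintype ι] :
    {x | ∃ i j : ι, i ≠ j ∧ x ∈ A i ∧ x ∈ A j} = ↑{x ∈ univ.biUnion A | 2 ≤ #{i | x ∈ A i}} := by
  ext x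
  simp only [Set.mem_ofPred_eq, coe_filter, mem_biUnion, mem_univ, true_and]
  constructor
  · rintro ⟨i, j, hij, hi, hj⟩
    exact ⟨⟨i, hi⟩, one_lt_card.2 ⟨i, by simpa using hi, j, by simpa using hj, hij⟩⟩
  · rintro ⟨-, h⟩
    obtain ⟨i, hi, j, hj, hij⟩ := one_lt_card.1 h
    exact ⟨i, j, hij, (mem_filter.1 hi).2, (mem_filter.1 hj).2⟩

variable [DecidableEq ι] (s : Finset ι)

theorem biInter_coe_eq_filter_subset {I : Finset ι} (hI : I.Nonempty) (hIs : I ⊆ s) :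
    ⋂ i ∈ I, (A i : Set α) = ↑{x ∈ s.biUnion A | I ⊆ {i ∈ s | x ∈ A i}} := by
  ext x
  obtain ⟨i₀, hi₀⟩ := hI
  simp only [Set.mem_iInter, mem_coe, coe_filter, Set.mem_ofPred_eq, mem_biUnion, subset_iff,
    mem_filter]
  exact ⟨fun h => ⟨⟨i₀, hIs hi₀, h i₀ hi₀⟩, fun i hi => ⟨hIs hi, h i hi⟩⟩,
    fun h i hi => (h.2 hi).2⟩

theorem sum_powersetCard_ncard_biInter {r : ℕ} (hr : r ≠ 0) :
    ∑ I ∈ s.powersetCard r, (⋂ i ∈ I, (A i : Set α)).ncard =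
      ∑ x ∈ s.biUnion A, (#{i ∈ s | x ∈ A i}).choose r := by
  calc ∑ I ∈ s.powersetCard r, (⋂ i ∈ I, (A i : Set α)).ncard
      = ∑ I ∈ s.powersetCard r, #{x ∈ s.biUnion A | I ⊆ {i ∈ s | x ∈ A i}} := by
        refine sum_congr rfl fun I hI => ?_
        obtain ⟨hIs, hcard⟩ := mem_powersetCard.1 hI
        rw [biInter_coe_eq_filter_subset A s (card_pos.1 (by omega)) hIs, Set.ncard_coe_finset]
    _ = ∑ x ∈ s.biUnion A, #{I ∈ s.powersetCard r | I ⊆ {i ∈ s | x ∈ A i}} :=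
        sum_card_bipartiteAbove_eq_sum_card_bipartiteBelow _
    _ = ∑ x ∈ s.biUnion A, (#{i ∈ s | x ∈ A i}).choose r := by
        refine sum_congr rfl fun x _ => ?_
        rw [← card_powersetCard]
        congr 1
        ext I
        simp only [mem_filter, mem_powersetCard]
        exact ⟨fun ⟨⟨_, hcard⟩, hsub⟩ => ⟨hsub, hcard⟩,
          fun ⟨hsub, hcard⟩ => ⟨⟨hsub.trans (filter_subset _ _), hcard⟩, hsub⟩⟩

end DoubleCounting

/-- If `A_1, …, A_m` are finite sets and `A` is the set of elements lying in at
least two of them, then `|A| = Σ_{r=2}^{m} (-1)^r (r-1) Σ_{|I|=r} |∩_{i∈I} A_i|`. -/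
theorem card_in_at_least_two_sets {α : Type*} (m : ℕ) (A : Fin m → Finset α) :
    (({x : α | ∃ i j : Fin m, i ≠ j ∧ x ∈ A i ∧ x ∈ A j}).ncard : ℤ) =
      ∑ r ∈ Finset.Icc 2 m, (-1 : ℤ) ^ r * ((r : ℤ) - 1) *
        ∑ I ∈ Finset.powersetCard r (Finset.univ : Finset (Fin m)),
          (((⋂ i ∈ I, (A i : Set α)).ncard : ℤ)) := by
  classical
  have hle : ∀ x, #{i | x ∈ A i} ≤ m := fun x => (card_filter_le _ _).trans (by simp)
  rw [setOf_exists_ne_mem_mem_eq, Set.ncard_coe_finset]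
  calc (#{x ∈ univ.biUnion A | 2 ≤ #{i | x ∈ A i}} : ℤ)
      = ∑ x ∈ univ.biUnion A, if 2 ≤ #{i | x ∈ A i} then 1 else 0 := by
        rw [sum_boole]
    _ = ∑ x ∈ univ.biUnion A, ∑ r ∈ Icc 2 m,
          (-1 : ℤ) ^ r * ((r : ℤ) - 1) * (#{i | x ∈ A i}).choose r := by
        simp only [sum_Icc_two_neg_one_pow_mul_sub_one_mul_choose (hle _)]
    _ = _ := by
        rw [sum_comm]
        refine sum_congr rfl fun r hr => ?_
        rw [← mul_sum, ← Nat.cast_sum, ← Nat.cast_sum,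
          sum_powersetCard_ncard_biInter A _ (by simp at hr; omega)]
end
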